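/- arXiv:1605.09055 — 5 statements merged into one kernel-verified Lean document; each statement's English description precedes it below -/
import Mathlib

section
/- Fix a red/blue-colored graph F on h vertices and a positive integer b. There exists a constant C > 0 such that for every n and every red/blue-colored graph G on n vertices which contains no copy of the b-blowup of F (as a red/blue-colored subgraph), the number of copies of F in G is at most C·n^{h − 1/b^{h−1}}. -/
open SimpleGraph

open Finset

def HasBox {h n : ℕ} (E : Finset (Fin h → Fin n)) (b : ℕ) : Prop :=
  ∃ S : Fin h → Finset (Fin n), (∀ i, (S i).card = b) ∧ ∀ f, (∀ i, f i ∈ S i) → f ∈ E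

lemma box_one {b n : ℕ} (hb : 0 < b) (E : Finset (Fin 1 → Fin n)) (hE : ¬ HasBox E b) :
    E.card < b := by
  classical
  by_contra hc
  push_neg at hc
  apply hE
  have hinj : Set.InjOn (fun f : Fin 1 → Fin n => f 0) E := fun f _ g _ hfg =>
    funext fun i => by rw [Subsingleton.elim i 0]; exact hfg
  have hcardA : b ≤ (E.image (fun f => f 0)).card := by
    rwa [Finset.card_image_of_injOn hinj]
  obtain ⟨T, hTsub, hTcard⟩ := Finset.exists_subset_card_eq hcardA
  refine ⟨fun _ => T, fun _ => hTcard, fun f hf => ?_⟩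
  have := hTsub (hf 0)
  simp only [Finset.mem_image] at this
  obtain ⟨g, hg, hg0⟩ := this
  have hfg : f = g := funext fun i => by rw [Subsingleton.elim i 0]; exact hg0.symm
  rwa [hfg]

lemma box_zero' {b n : ℕ} (E : Finset (Fin 0 → Fin n)) (hE : ¬ HasBox E b) : E.card = 0 := by
  rw [Finset.card_eq_zero]
  by_contra hne
  obtain ⟨f, hf⟩ := Finset.nonempty_iff_ne_empty.2 hne
  exact hE ⟨fun i => i.elim0, fun i => i.elim0, fun g _ => by rwa [Subsingleton.elim g f]⟩

lemma box_step {b h : ℕ} (hb : 0 < b) (hh : 1 ≤ h) {C : ℝ} (hC : 0 < C)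
    (IH : ∀ n : ℕ, ∀ E : Finset (Fin h → Fin n), ¬ HasBox E b →
      (E.card : ℝ) ≤ C * (n : ℝ) ^ ((h : ℝ) - 1 / (b : ℝ) ^ (h - 1))) :
    ∀ n : ℕ, ∀ E : Finset (Fin (h+1) → Fin n), ¬ HasBox E b →
      (E.card : ℝ) ≤ ((b : ℝ) + ((b.factorial : ℝ) * C) ^ (1/(b:ℝ))) *
        (n : ℝ) ^ ((h : ℝ) + 1 - 1 / (b : ℝ) ^ h) := by
  classical
  intro n E hE
  have hC'0 : (0:ℝ) ≤ (b : ℝ) + ((b.factorial : ℝ) * C) ^ (1/(b:ℝ)) := by positivity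
  rcases Nat.eq_zero_or_pos n with hn | hn
  · subst hn
    have hempty : IsEmpty (Fin (h+1) → Fin 0) := ⟨fun f => (f 0).elim0⟩
    have : E = ∅ := Finset.eq_empty_of_isEmpty E
    rw [this]
    simp only [Finset.card_empty, Nat.cast_zero, Nat.cast_ofNat]
    positivity
  -- main case
  have hn0 : (0:ℝ) < (n:ℝ) := by exact_mod_cast hn
  have hn1 : (1:ℝ) ≤ (n:ℝ) := by exact_mod_cast hn
  have hb0 : (0:ℝ) < (b:ℝ) := by exact_mod_cast hb
  set d : (Fin h → Fin n) → ℕ :=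
    fun e => (univ.filter (fun v => Fin.cons v e ∈ E)).card with hd
  -- E.card = sum of degrees
  have hsum : E.card = ∑ e : Fin h → Fin n, d e := by
    have h1 : E.card = ∑ f : Fin (h+1) → Fin n, if f ∈ E then 1 else 0 := by
      rw [← Finset.card_filter]
      congr 1
      ext f
      simp
    have h2 : ∑ f : Fin (h+1) → Fin n, (if f ∈ E then 1 else 0)
        = ∑ p : Fin n × (Fin h → Fin n), (if Fin.cons p.1 p.2 ∈ E then 1 else 0) :=
      (Fintype.sum_equiv (Fin.consEquiv (fun _ : Fin (h+1) => Fin n))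
        _ _ (fun p => rfl)).symm
    rw [h1, h2, Fintype.sum_prod_type, Finset.sum_comm]
    refine Finset.sum_congr rfl fun e _ => ?_
    show _ = (univ.filter (fun v => Fin.cons v e ∈ E)).card
    rw [Finset.card_filter]
  -- restriction sets have no box
  have key : ∀ T ∈ (univ : Finset (Fin n)).powersetCard b,
      ((univ.filter (fun e : Fin h → Fin n => ∀ v ∈ T, Fin.cons v e ∈ E)).card : ℝ)
        ≤ C * (n : ℝ) ^ ((h : ℝ) - 1 / (b : ℝ) ^ (h - 1)) := by
    intro T hT
    apply IH
    rintro ⟨S', hS'card, hS'mem⟩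
    apply hE
    refine ⟨Fin.cons T S', fun i => ?_, fun f hf => ?_⟩
    · refine Fin.cases ?_ (fun j => ?_) i
      · rw [Fin.cons_zero]
        exact (Finset.mem_powersetCard.1 hT).2
      · rw [Fin.cons_succ]; exact hS'card j
    · have htail : Fin.tail f ∈ univ.filter (fun e : Fin h → Fin n => ∀ v ∈ T, Fin.cons v e ∈ E) :=
        hS'mem (Fin.tail f) (fun i => by simpa [Fin.tail, Fin.cons_succ] using hf i.succ)
      rw [Finset.mem_filter] at htail
      have h0 : f 0 ∈ T := by simpa [Fin.cons_zero] using hf 0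
      have := htail.2 (f 0) h0
      rwa [Fin.cons_self_tail] at this
  -- double counting
  have hdc : ∑ e : Fin h → Fin n, (d e).choose b
      = ∑ T ∈ (univ : Finset (Fin n)).powersetCard b,
          (univ.filter (fun e : Fin h → Fin n => ∀ v ∈ T, Fin.cons v e ∈ E)).card := by
    have h1 : ∀ e : Fin h → Fin n, (d e).choose b
        = ∑ T ∈ (univ : Finset (Fin n)).powersetCard b,
            if (∀ v ∈ T, Fin.cons v e ∈ E) then 1 else 0 := by
      intro e
      rw [← Finset.card_filter, hd, ← Finset.card_powersetCard]
      congr 1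
      ext T
      simp only [Finset.mem_powersetCard, Finset.mem_filter, Finset.subset_iff,
        Finset.mem_univ, true_and]
      tauto
    calc ∑ e : Fin h → Fin n, (d e).choose b
        = ∑ e : Fin h → Fin n, ∑ T ∈ (univ : Finset (Fin n)).powersetCard b,
            (if (∀ v ∈ T, Fin.cons v e ∈ E) then 1 else 0) :=
          Finset.sum_congr rfl fun e _ => h1 e
      _ = ∑ T ∈ (univ : Finset (Fin n)).powersetCard b, ∑ e : Fin h → Fin n,
            (if (∀ v ∈ T, Fin.cons v e ∈ E) then 1 else 0) := Finset.sum_comm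
      _ = _ := Finset.sum_congr rfl fun T _ => (Finset.card_filter _ _).symm
  -- bound the T-sum
  set M : ℝ := C * (n : ℝ) ^ ((h : ℝ) - 1 / (b : ℝ) ^ (h - 1)) with hM
  have hM0 : (0:ℝ) ≤ M := by positivity
  have hTbound : (∑ T ∈ (univ : Finset (Fin n)).powersetCard b,
      (((univ.filter (fun e : Fin h → Fin n => ∀ v ∈ T, Fin.cons v e ∈ E)).card : ℕ) : ℝ))
      ≤ (n:ℝ)^b * M := by
    calc _ ≤ ∑ _T ∈ (univ : Finset (Fin n)).powersetCard b, M := Finset.sum_le_sum key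
      _ = (((univ : Finset (Fin n)).powersetCard b).card : ℝ) * M := by
          rw [Finset.sum_const, nsmul_eq_mul]
      _ ≤ (n:ℝ)^b * M := by
          apply mul_le_mul_of_nonneg_right _ hM0
          rw [Finset.card_powersetCard, Finset.card_univ, Fintype.card_fin]
          exact_mod_cast Nat.choose_le_pow n b
  have hnat : ∀ e : Fin h → Fin n, (d e + 1 - b)^b ≤ b.factorial * (d e).choose b := by
    intro e
    calc (d e + 1 - b)^b ≤ (d e).descFactorial b := Nat.pow_sub_le_descFactorial _ _
      _ = b.factorial * (d e).choose b := Nat.descFactorial_eq_factorial_mul_choose _ _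
  have hxsum : ∑ e : Fin h → Fin n, ((d e + 1 - b : ℕ) : ℝ) ^ b
      ≤ (b.factorial : ℝ) * ((n:ℝ)^b * M) := by
    have h2 : ∑ e : Fin h → Fin n, (d e + 1 - b)^b
        ≤ b.factorial * ∑ e : Fin h → Fin n, (d e).choose b := by
      rw [Finset.mul_sum]; exact Finset.sum_le_sum (fun e _ => hnat e)
    rw [hdc] at h2
    calc ∑ e : Fin h → Fin n, ((d e + 1 - b : ℕ) : ℝ) ^ b
        = ((∑ e : Fin h → Fin n, (d e + 1 - b)^b : ℕ) : ℝ) := by push_cast; rfl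
      _ ≤ ((b.factorial * ∑ T ∈ (univ : Finset (Fin n)).powersetCard b,
            (univ.filter (fun e : Fin h → Fin n => ∀ v ∈ T, Fin.cons v e ∈ E)).card : ℕ) : ℝ) := by
          exact_mod_cast h2
      _ = (b.factorial : ℝ) * ∑ T ∈ (univ : Finset (Fin n)).powersetCard b,
            (((univ.filter (fun e : Fin h → Fin n => ∀ v ∈ T, Fin.cons v e ∈ E)).card : ℕ) : ℝ) := by
          push_cast; rfl
      _ ≤ (b.factorial : ℝ) * ((n:ℝ)^b * M) := by
          apply mul_le_mul_of_nonneg_left hTbound (by positivity)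
  -- power mean
  have hcardu : (((univ : Finset (Fin h → Fin n)).card : ℕ) : ℝ) = (n:ℝ)^h := by
    rw [Finset.card_univ, Fintype.card_fun, Fintype.card_fin, Fintype.card_fin]
    push_cast; rfl
  have hpm := pow_sum_div_card_le_sum_pow
    (s := (univ : Finset (Fin h → Fin n)))
    (f := fun e => ((d e + 1 - b : ℕ) : ℝ)) (fun i _ => by positivity) (b-1)
  rw [Nat.sub_add_cancel hb] at hpm
  have hpm2 : (∑ e : Fin h → Fin n, ((d e + 1 - b : ℕ) : ℝ))^b
      ≤ ((n:ℝ)^h)^(b-1) * ((b.factorial : ℝ) * ((n:ℝ)^b * M)) := by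
    rw [div_le_iff₀ (by rw [hcardu]; positivity)] at hpm
    calc (∑ e : Fin h → Fin n, ((d e + 1 - b : ℕ) : ℝ))^b
        ≤ (∑ e : Fin h → Fin n, ((d e + 1 - b : ℕ) : ℝ)^b)
            * (((univ : Finset (Fin h → Fin n)).card : ℝ))^(b-1) := hpm
      _ = (((univ : Finset (Fin h → Fin n)).card : ℝ))^(b-1)
            * (∑ e : Fin h → Fin n, ((d e + 1 - b : ℕ) : ℝ)^b) := mul_comm _ _
      _ ≤ _ := by
          rw [hcardu]
          exact mul_le_mul_of_nonneg_left hxsum (by positivity)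
  -- exponent arithmetic
  have hbne : (b:ℝ) ≠ 0 := ne_of_gt hb0
  have hbh : (b:ℝ)^h = (b:ℝ)^(h-1) * b := by
    conv_lhs => rw [← Nat.sub_add_cancel hh]
    rw [pow_succ]
  have hbpne : (b:ℝ)^(h-1) ≠ 0 := pow_ne_zero _ hbne
  have hexp : (b:ℝ) + ((h:ℝ) - 1/(b:ℝ)^(h-1)) + ((h*(b-1) : ℕ):ℝ)
      = ((h:ℝ) + 1 - 1/(b:ℝ)^h) * b := by
    rw [hbh]
    push_cast [Nat.cast_sub hb]
    field_simp
    ring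
  set K : ℝ := ((b.factorial:ℝ)*C) ^ (1/(b:ℝ)) * (n:ℝ) ^ ((h:ℝ) + 1 - 1/(b:ℝ)^h) with hK
  have hEq : ((n:ℝ)^h)^(b-1) * ((b.factorial : ℝ) * ((n:ℝ)^b * M)) = K ^ b := by
    rw [hK, hM, mul_pow,
      ← Real.rpow_natCast (((b.factorial:ℝ)*C) ^ (1/(b:ℝ))) b,
      ← Real.rpow_mul (by positivity), one_div_mul_cancel hbne, Real.rpow_one,
      ← Real.rpow_natCast ((n:ℝ) ^ ((h:ℝ) + 1 - 1/(b:ℝ)^h)) b,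
      ← Real.rpow_mul hn0.le, ← hexp,
      ← pow_mul, ← Real.rpow_natCast (n:ℝ) b, ← Real.rpow_natCast (n:ℝ) (h*(b-1)),
      Real.rpow_add hn0, Real.rpow_add hn0]
    ring
  have hKnn : (0:ℝ) ≤ K := by positivity
  have hxK : ∑ e : Fin h → Fin n, ((d e + 1 - b : ℕ) : ℝ) ≤ K := by
    refine (pow_le_pow_iff_left₀ (Finset.sum_nonneg fun e _ => by positivity) hKnn
      (Nat.pos_iff_ne_zero.1 hb)).1 ?_
    rw [← hEq]; exact hpm2
  -- assemble
  have hcard_le : (E.card : ℝ) ≤ ((b:ℝ) - 1) * (n:ℝ)^h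
      + ∑ e : Fin h → Fin n, ((d e + 1 - b : ℕ) : ℝ) := by
    have h3 : E.card ≤ (∑ e : Fin h → Fin n, (d e + 1 - b)) + (n^h) * (b-1) := by
      rw [hsum]
      calc ∑ e : Fin h → Fin n, d e
          ≤ ∑ e : Fin h → Fin n, ((d e + 1 - b) + (b-1)) :=
            Finset.sum_le_sum (fun e _ => by omega)
        _ = (∑ e : Fin h → Fin n, (d e + 1 - b))
              + ((univ : Finset (Fin h → Fin n)).card) * (b-1) := by
            rw [Finset.sum_add_distrib, Finset.sum_const, smul_eq_mul]
        _ = _ := by rw [Finset.card_univ, Fintype.card_fun, Fintype.card_fin, Fintype.card_fin]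
    calc (E.card:ℝ) ≤ ((∑ e : Fin h → Fin n, (d e + 1 - b)) + (n^h) * (b-1) : ℕ) := by
          exact_mod_cast h3
      _ = (∑ e : Fin h → Fin n, ((d e + 1 - b : ℕ) : ℝ)) + (n:ℝ)^h * ((b:ℝ)-1) := by
          push_cast [Nat.cast_sub hb]; ring
      _ = _ := by ring
  have hb1 : (1:ℝ) ≤ (b:ℝ) := by exact_mod_cast hb
  have hnh : (n:ℝ)^h ≤ (n:ℝ) ^ ((h:ℝ) + 1 - 1/(b:ℝ)^h) := by
    rw [← Real.rpow_natCast (n:ℝ) h]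
    apply Real.rpow_le_rpow_of_exponent_le hn1
    have h1b : 1/(b:ℝ)^h ≤ 1 := by
      rw [div_le_one (by positivity)]
      exact one_le_pow₀ hb1
    linarith
  calc (E.card : ℝ) ≤ ((b:ℝ) - 1) * (n:ℝ)^h
        + ∑ e : Fin h → Fin n, ((d e + 1 - b : ℕ) : ℝ) := hcard_le
    _ ≤ ((b:ℝ) - 1) * (n:ℝ) ^ ((h:ℝ) + 1 - 1/(b:ℝ)^h) + K := by
        refine add_le_add ?_ hxK
        exact mul_le_mul_of_nonneg_left hnh (by linarith)
    _ = ((b:ℝ) - 1 + ((b.factorial:ℝ)*C) ^ (1/(b:ℝ)))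
          * (n:ℝ) ^ ((h:ℝ) + 1 - 1/(b:ℝ)^h) := by rw [hK]; ring
    _ ≤ ((b : ℝ) + ((b.factorial : ℝ) * C) ^ (1/(b:ℝ)))
          * (n:ℝ) ^ ((h:ℝ) + 1 - 1/(b:ℝ)^h) := by
        apply mul_le_mul_of_nonneg_right _ (by positivity)
        linarith

lemma box_main (b : ℕ) (hb : 0 < b) (h : ℕ) :
    ∃ C : ℝ, 0 < C ∧ ∀ n : ℕ, ∀ E : Finset (Fin h → Fin n), ¬ HasBox E b →
      (E.card : ℝ) ≤ C * (n : ℝ) ^ ((h : ℝ) - 1 / (b : ℝ) ^ (h - 1)) := by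
  rcases Nat.eq_zero_or_pos h with rfl | hh
  · refine ⟨1, one_pos, fun n E hE => ?_⟩
    rw [box_zero' E hE]
    simp only [Nat.cast_zero]
    positivity
  · induction h, hh using Nat.le_induction with
    | base =>
      refine ⟨b, by exact_mod_cast hb, fun n E hE => ?_⟩
      have he : ((1:ℕ):ℝ) - 1 / (b:ℝ)^(1-1) = 0 := by norm_num
      rw [he, Real.rpow_zero, mul_one]
      exact_mod_cast (box_one hb E hE).le
    | succ h hh IH =>
      obtain ⟨C, hC, hIH⟩ := IH
      have hCpos : (0:ℝ) < (b : ℝ) + ((b.factorial : ℝ) * C) ^ (1/(b:ℝ)) := by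
        have h1 : (0:ℝ) < (b:ℝ) := by exact_mod_cast hb
        have h2 : (0:ℝ) < (b.factorial : ℝ) * C :=
          mul_pos (by exact_mod_cast b.factorial_pos) hC
        exact add_pos h1 (Real.rpow_pos_of_pos h2 _)
      refine ⟨(b : ℝ) + ((b.factorial : ℝ) * C) ^ (1/(b:ℝ)), hCpos, fun n E hE => ?_⟩
      have hexp : (((h+1:ℕ)):ℝ) - 1/(b:ℝ)^((h+1)-1) = (h:ℝ) + 1 - 1/(b:ℝ)^h := by
        push_cast [Nat.succ_sub_one]
        ring_nf
      rw [hexp]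
      exact box_step hb hh hC hIH n E hE


/--
A red/blue-colored graph is modelled as a pair of edge-disjoint simple graphs
(the red graph and the blue graph) on the same vertex set.

`F` is a red/blue-colored graph on `h` vertices given by `(FR, FB)`, and `b` is
a positive integer. The `b`-blowup of `F` is the red/blue-colored graph on
`Fin h × Fin b` given by `(FR.comap Prod.fst, FB.comap Prod.fst)`.
A (labeled) copy of a red/blue-colored graph `(F₁, F₂)` in `(G₁, G₂)` is an
injective map of the vertices sending red edges to red edges and blue edges to
blue edges. The theorem: there is a constant `C > 0` such that for every `n`
and every red/blue-colored graph `G = (GR, GB)` on `n` vertices containing no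
copy of the `b`-blowup of `F`, the number of copies of `F` in `G` is at most
`C · n ^ (h - 1/b^(h-1))`.
-/
theorem stmt9 (h b : ℕ) (hb : 0 < b) (FR FB : SimpleGraph (Fin h))
    (hF : Disjoint FR.edgeSet FB.edgeSet) :
    ∃ C : ℝ, 0 < C ∧ ∀ n : ℕ, ∀ GR GB : SimpleGraph (Fin n),
      Disjoint GR.edgeSet GB.edgeSet →
      (¬ ∃ f : Fin h × Fin b → Fin n, Function.Injective f ∧
        (∀ u v, (FR.comap Prod.fst).Adj u v → GR.Adj (f u) (f v)) ∧
        (∀ u v, (FB.comap Prod.fst).Adj u v → GB.Adj (f u) (f v))) →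
      ({f : Fin h → Fin n | Function.Injective f ∧
          (∀ u v, FR.Adj u v → GR.Adj (f u) (f v)) ∧
          (∀ u v, FB.Adj u v → GB.Adj (f u) (f v))}.ncard : ℝ)
        ≤ C * (n : ℝ) ^ ((h : ℝ) - 1 / (b : ℝ) ^ (h - 1)) := by
  classical
  obtain ⟨C, hC, hbox⟩ := box_main b hb h
  refine ⟨C, hC, fun n GR GB hG hno => ?_⟩
  set E : Finset (Fin h → Fin n) :=
    Finset.univ.filter (fun f => Function.Injective f ∧
      (∀ u v, FR.Adj u v → GR.Adj (f u) (f v)) ∧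
      (∀ u v, FB.Adj u v → GB.Adj (f u) (f v))) with hEdef
  have hncard : ({f : Fin h → Fin n | Function.Injective f ∧
      (∀ u v, FR.Adj u v → GR.Adj (f u) (f v)) ∧
      (∀ u v, FB.Adj u v → GB.Adj (f u) (f v))}.ncard : ℝ) = (E.card : ℝ) := by
    congr 1
    rw [← Set.ncard_coe_finset]
    congr 1
    ext f
    simp [hEdef]
  have hnb : ¬ HasBox E b := by
    rintro ⟨S, hScard, hSmem⟩
    have hmem : ∀ f : Fin h → Fin n, (∀ i, f i ∈ S i) →
        Function.Injective f ∧ (∀ u v, FR.Adj u v → GR.Adj (f u) (f v)) ∧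
        (∀ u v, FB.Adj u v → GB.Adj (f u) (f v)) := fun f hf => by
      have := hSmem f hf
      rw [hEdef, Finset.mem_filter] at this
      exact this.2
    set g : Fin h × Fin b → Fin n :=
      fun p => ((S p.1).orderIsoOfFin (hScard p.1) p.2 : Fin n) with hg
    have hgS : ∀ p : Fin h × Fin b, g p ∈ S p.1 := fun p => Finset.coe_mem _
    have htrans : ∀ (i j : Fin h) (w₁ w₂ : Fin n), i ≠ j → w₁ ∈ S i → w₂ ∈ S j →
        ∃ f : Fin h → Fin n, (Function.Injective f ∧
          (∀ u v, FR.Adj u v → GR.Adj (f u) (f v)) ∧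
          (∀ u v, FB.Adj u v → GB.Adj (f u) (f v))) ∧ f i = w₁ ∧ f j = w₂ := by
      intro i j w₁ w₂ hij h1 h2
      refine ⟨fun m => if m = i then w₁ else if m = j then w₂ else g (m, ⟨0, hb⟩), ?_, ?_, ?_⟩
      · apply hmem
        intro m
        by_cases hmi : m = i
        · subst hmi; simp only [if_pos rfl]; exact h1
        · by_cases hmj : m = j
          · subst hmj; simp only [if_neg hmi, if_pos rfl]; exact h2
          · simp only [if_neg hmi, if_neg hmj]; exact hgS (m, ⟨0, hb⟩)
      · simp
      · simp [Ne.symm hij]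
    have hginj : Function.Injective g := by
      rintro ⟨i, k⟩ ⟨j, l⟩ hpq
      by_cases hij : i = j
      · subst hij
        have hkl : k = l := by
          have := Subtype.ext (hpq : ((S i).orderIsoOfFin (hScard i) k : Fin n)
            = ((S i).orderIsoOfFin (hScard i) l : Fin n))
          exact ((S i).orderIsoOfFin (hScard i)).injective this
        rw [hkl]
      · exfalso
        obtain ⟨f, hf, hfi, hfj⟩ := htrans i j (g (i,k)) (g (j,l)) hij (hgS (i,k)) (hgS (j,l))
        apply hij
        apply hf.1
        rw [hfi, hfj, hpq]
    apply hno
    refine ⟨g, hginj, ?_, ?_⟩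
    · intro u v huv
      rw [SimpleGraph.comap_adj] at huv
      have hne : u.1 ≠ v.1 := FR.ne_of_adj huv
      obtain ⟨f, hf, hfu, hfv⟩ := htrans u.1 v.1 (g u) (g v) hne (hgS u) (hgS v)
      have := hf.2.1 u.1 v.1 huv
      rwa [hfu, hfv] at this
    · intro u v huv
      rw [SimpleGraph.comap_adj] at huv
      have hne : u.1 ≠ v.1 := FB.ne_of_adj huv
      obtain ⟨f, hf, hfu, hfv⟩ := htrans u.1 v.1 (g u) (g v) hne (hgS u) (hgS v)
      have := hf.2.2 u.1 v.1 huv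
      rwa [hfu, hfv] at this
  rw [hncard]
  exact hbox n E hnb
end

section
/- Fix a real number δ with 0 < δ ≤ 0.001. Consider real numbers a, b, c, d satisfying a ≥ 0, b ≥ 0, c ≥ 0, d = 1 − a − b − c, a·b ≥ (2−√2)/16 and d ≥ δ, and let f(a,b,c,d) = 2ab + 2bc + 2cd + d². Then f(a,b,c,d) ≤ 1/2, and equality holds exactly at the unique point (a,b,c,d) = (1/2 − √2/4, 1/4, 1/4, √2/4). Moreover, for every ε > 0 there exists η > 0 such that any (a,b,c,d) satisfying the above constraints with f(a,b,c,d) ≥ 1/2 − η satisfies |a − (1/2 − √2/4)| ≤ ε, |b − 1/4| ≤ ε, |c − 1/4| ≤ ε and |d − √2/4| ≤ ε. -/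
set_option maxHeartbeats 1000000

lemma aux_core (s a b : ℝ) (hs2 : s^2 = 2) (hs1 : 1.414 ≤ s) (hs3 : s ≤ 1.415)
    (ha : 0 ≤ a) (hb : 0 ≤ b)
    (hab : (2 - s)/16 ≤ a*b) (hB : a + 2*b ≤ 1) :
    s*(1-a-2*b) ≤ 1-2*b ∧ 0 ≤ 1-a-2*b ∧ (2-s)/8 ≤ 1-2*b := by
  have hbpos : 0 < b := by
    by_contra h
    push_neg at h
    nlinarith [mul_nonneg ha (neg_nonneg.mpr h)]
  have hb2 : 2*b ≤ 1 := by linarith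
  have ha' : (2-s)*(1-2*b)/2 ≤ a := by
    have h1 : b*((2-s)*(1-2*b)/2) ≤ b*a := by
      nlinarith [mul_nonneg (show (0:ℝ) ≤ 2-s by linarith) (sq_nonneg (4*b-1))]
    exact le_of_mul_le_mul_left h1 hbpos
  have hs0 : (0:ℝ) ≤ s := by linarith
  have hsr : s*(1-a-2*b) ≤ 1-2*b := by
    nlinarith [mul_le_mul_of_nonneg_left ha' hs0, hs2]
  refine ⟨hsr, by linarith, ?_⟩
  nlinarith [mul_le_mul_of_nonneg_right (show a ≤ 1-2*b by linarith) hb, sq_nonneg (1-2*b)]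

lemma aux_stab (s δ η a b c : ℝ) (hs2 : s^2 = 2) (hs1 : 1.414 ≤ s) (hs3 : s ≤ 1.415)
    (hδ : 0 < δ) (hδ' : δ ≤ 0.001)
    (ha : 0 ≤ a) (hb : 0 ≤ b) (hc : 0 ≤ c)
    (hab : (2 - s)/16 ≤ a*b) (hdδ : δ ≤ 1 - a - b - c)
    (hη : 0 < η) (hηδ : η ≤ δ^2/2)
    (hf : 1/2 - η ≤ 2*a*b + 2*b*c + 2*c*(1-a-b-c) + (1-a-b-c)^2) :
    (a - (1/2 - s/4))^2 ≤ 3200*η ∧ (b - 1/4)^2 ≤ 3200*η ∧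
    (c - 1/4)^2 ≤ 3200*η ∧ ((1-a-b-c) - s/4)^2 ≤ 3200*η := by
  have hs0 : (0:ℝ) ≤ s := by linarith
  have hη1 : η ≤ 1 := by
    have := mul_le_mul hδ' hδ' hδ.le (by norm_num)
    linarith
  have hη2 : η^2 ≤ η := by
    have := mul_le_mul_of_nonneg_right hη1 hη.le
    nlinarith [this]
  have hG : 1/2 - (2*a*b + 2*b*c + 2*c*(1-a-b-c) + (1-a-b-c)^2)
      = (1-2*b)^2/2 + (b-c)^2 - (1-a-2*b)^2 := by ring
  -- exclude a+2b > 1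
  have hB : a + 2*b ≤ 1 := by
    by_contra hA
    push_neg at hA
    have h1 := mul_self_le_mul_self (show (0:ℝ) ≤ a+2*b-1+δ by linarith)
      (show a+2*b-1+δ ≤ b-c by linarith)
    have h2 := mul_nonneg hδ.le (show (0:ℝ) ≤ a+2*b-1 by linarith)
    have h3 := sq_nonneg (1-2*b)
    linarith [h1, h2, h3, hG.le, hf]
  obtain ⟨hsr, hr, hq2k⟩ := aux_core s a b hs2 hs1 hs3 ha hb hab hB
  have hX0 : 0 ≤ (1-2*b) - s*(1-a-2*b) := by linarith
  have hqsr : 0 ≤ s*(1-a-2*b) := mul_nonneg hs0 hr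
  have h2r : 2*(1-a-2*b)^2 ≤ (1-2*b)^2 := by
    have e1 : (s*(1-a-2*b))*(s*(1-a-2*b)) = 2*(1-a-2*b)^2 := by
      linear_combination ((1-a-2*b)^2) * hs2
    have := mul_self_le_mul_self hqsr hsr
    linarith
  have h1 : (b-c)^2 ≤ η := by linarith [h2r, hf, hG.le, hG.ge]
  have hq2 : (1-2*b)^2 - 2*(1-a-2*b)^2 ≤ 2*η := by
    linarith [sq_nonneg (b-c), hf, hG.le, hG.ge]
  have e : ((1-2*b) - s*(1-a-2*b)) * ((1-2*b) + s*(1-a-2*b))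
      = (1-2*b)^2 - 2*(1-a-2*b)^2 := by
    linear_combination (-(1-a-2*b)^2) * hs2
  have h2 : (1-2*b) - s*(1-a-2*b) ≤ 30*η := by
    have h21 := mul_nonneg hX0
      (show (0:ℝ) ≤ (1-2*b) + s*(1-a-2*b) - 73/1000 by linarith)
    linarith [h21, e.ge, e.le, hq2]
  have hstar : b*((1-2*b) - s*(1-a-2*b))
      = s*(a*b - (2-s)/16) + s*(2-s)*(4*b-1)^2/16 := by
    linear_combination (((4*b-1)^2 - 1)/16) * hs2
  have hconv : s*(2-s)*(4*b-1)^2 = (2*s-2)*(4*b-1)^2 := by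
    linear_combination (-(4*b-1)^2) * hs2
  have h3 : (4*b-1)^2 ≤ 300*η := by
    have t1 : 0 ≤ s*(a*b - (2-s)/16) := mul_nonneg hs0 (by linarith)
    have t2 : 0 ≤ (1/2 - b)*((1-2*b) - s*(1-a-2*b)) :=
      mul_nonneg (by linarith) hX0
    have t3 : 0 ≤ (2*s - 2 - 207/250)*(4*b-1)^2 :=
      mul_nonneg (by linarith) (sq_nonneg _)
    linarith [hstar.le, hstar.ge, hconv.le, hconv.ge, t1, t2, t3, h2]
  have hid : s*(a - (1/2 - s/4)) = ((1-2*b) - s*(1-a-2*b)) - 2*(s-1)*(b-1/4) := by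
    linear_combination (1/4) * hs2
  have hidsq : 2*(a - (1/2 - s/4))^2
      = (((1-2*b) - s*(1-a-2*b)) - 2*(s-1)*(b-1/4))^2 := by
    linear_combination (-(a - (1/2 - s/4))^2) * hs2 +
      (s*(a-(1/2-s/4)) + ((1-2*b)-s*(1-a-2*b)) - 2*(s-1)*(b-1/4)) * hid
  have hXsq : ((1-2*b) - s*(1-a-2*b))^2 ≤ 900*η^2 := by
    have := mul_self_le_mul_self hX0 h2
    linarith [this]
  have h5 : (s-1)^2 ≤ 9/50 := by nlinarith [hs1, hs3, hs2]
  have hy : (s-1)^2 * (4*b-1)^2 ≤ (9/50) * (300*η) :=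
    mul_le_mul h5 h3 (sq_nonneg _) (by norm_num)
  have h4 : (a - (1/2 - s/4))^2 ≤ 1000*η := by
    linarith [hidsq.le, hXsq, hy, hη2,
      sq_nonneg (((1-2*b) - s*(1-a-2*b)) + 2*(s-1)*(b-1/4))]
  have h3' : (b - 1/4)^2 ≤ 300*η/16 := by linarith [h3]
  have hcb : (c - 1/4)^2 ≤ 40*η := by
    linarith [h1, h3', sq_nonneg ((b-1/4) + (b-c))]
  refine ⟨by linarith, by linarith, by linarith, ?_⟩
  have hdd : (1-a-b-c) - s/4 = -((a - (1/2 - s/4)) + (b - 1/4) + (c - 1/4)) := by ring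
  rw [hdd]
  linarith [h4, h3', hcb, sq_nonneg ((a-(1/2-s/4)) - (b-1/4)),
    sq_nonneg ((b-1/4) - (c-1/4)), sq_nonneg ((a-(1/2-s/4)) - (c-1/4))]


lemma aux_ineq (s a b c : ℝ) (hs2 : s^2 = 2) (hs1 : 1.414 ≤ s) (hs3 : s ≤ 1.415)
    (ha : 0 ≤ a) (hb : 0 ≤ b) (hc : 0 ≤ c) (hsum : a + b + c ≤ 1)
    (hab : (2 - s)/16 ≤ a*b) :
    2*a*b + 2*b*c + 2*c*(1-a-b-c) + (1-a-b-c)^2 ≤ 1/2 := by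
  have hs0 : (0:ℝ) ≤ s := by linarith
  rcases le_or_gt (a + 2*b) 1 with hB | hA
  · obtain ⟨hsr, hr, _⟩ := aux_core s a b hs2 hs1 hs3 ha hb hab hB
    nlinarith [mul_self_le_mul_self (mul_nonneg hs0 hr) hsr, hs2, sq_nonneg (b-c)]
  · nlinarith [mul_self_le_mul_self (show (0:ℝ) ≤ a+2*b-1 by linarith)
      (show a+2*b-1 ≤ b-c by linarith), sq_nonneg (1-2*b)]

lemma abs_le_of_sq_le' (x e : ℝ) (he : 0 < e) (h : x^2 ≤ e^2) : |x| ≤ e := by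
  rw [abs_le]
  constructor <;> nlinarith [sq_nonneg (x+e), sq_nonneg (x-e)]

lemma aux_squeeze (x M : ℝ) (hM : 0 < M)
    (h : ∀ η : ℝ, 0 < η → η ≤ M → x^2 ≤ 3200*η) : x = 0 := by
  rcases eq_or_ne x 0 with h0 | h0
  · exact h0
  · exfalso
    have hx : 0 < x^2 := by positivity
    have h1 := h (min M (x^2/6400)) (lt_min hM (by positivity)) (min_le_left _ _)
    have h2 := min_le_right M (x^2/6400)
    nlinarith [h1, h2]

theorem stmt16 (δ : ℝ) (hδ : 0 < δ) (hδ' : δ ≤ 0.001) :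
    (∀ a b c d : ℝ, 0 ≤ a → 0 ≤ b → 0 ≤ c → d = 1 - a - b - c →
      (2 - Real.sqrt 2) / 16 ≤ a * b → δ ≤ d →
      2 * a * b + 2 * b * c + 2 * c * d + d ^ 2 ≤ 1 / 2 ∧
      (2 * a * b + 2 * b * c + 2 * c * d + d ^ 2 = 1 / 2 ↔
        a = 1 / 2 - Real.sqrt 2 / 4 ∧ b = 1 / 4 ∧ c = 1 / 4 ∧
        d = Real.sqrt 2 / 4)) ∧
    ∀ ε : ℝ, 0 < ε → ∃ η : ℝ, 0 < η ∧
      ∀ a b c d : ℝ, 0 ≤ a → 0 ≤ b → 0 ≤ c → d = 1 - a - b - c →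
        (2 - Real.sqrt 2) / 16 ≤ a * b → δ ≤ d →
        1 / 2 - η ≤ 2 * a * b + 2 * b * c + 2 * c * d + d ^ 2 →
        |a - (1 / 2 - Real.sqrt 2 / 4)| ≤ ε ∧ |b - 1 / 4| ≤ ε ∧
        |c - 1 / 4| ≤ ε ∧ |d - Real.sqrt 2 / 4| ≤ ε := by
  set s := Real.sqrt 2 with hsdef
  have hs2 : s^2 = 2 := Real.sq_sqrt (by norm_num)
  have hs0 : (0:ℝ) ≤ s := Real.sqrt_nonneg 2
  have hs1 : 1.414 ≤ s := by nlinarith [hs2, hs0]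
  have hs3 : s ≤ 1.415 := by nlinarith [hs2, hs0]
  have hMpos : 0 < δ^2/2 := by positivity
  constructor
  · intro a b c d ha hb hc hd hab hdd
    subst hd
    constructor
    · have := aux_ineq s a b c hs2 hs1 hs3 ha hb hc (by linarith) hab
      linarith
    · constructor
      · intro heq
        have hall : ∀ η : ℝ, 0 < η → η ≤ δ^2/2 →
            (a - (1/2 - s/4))^2 ≤ 3200*η ∧ (b - 1/4)^2 ≤ 3200*η ∧
            (c - 1/4)^2 ≤ 3200*η ∧ ((1-a-b-c) - s/4)^2 ≤ 3200*η := by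
          intro η hη hηδ
          exact aux_stab s δ η a b c hs2 hs1 hs3 hδ hδ' ha hb hc hab hdd hη hηδ
            (by linarith [heq])
        have e1 : a - (1/2 - s/4) = 0 :=
          aux_squeeze _ _ hMpos (fun η h1 h2 => (hall η h1 h2).1)
        have e2 : b - 1/4 = 0 :=
          aux_squeeze _ _ hMpos (fun η h1 h2 => (hall η h1 h2).2.1)
        have e3 : c - 1/4 = 0 :=
          aux_squeeze _ _ hMpos (fun η h1 h2 => (hall η h1 h2).2.2.1)
        refine ⟨by linarith, by linarith, by linarith, by linarith⟩
      · rintro ⟨rfl, rfl, rfl, -⟩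
        linear_combination (1/16) * hs2
  · intro ε hε
    refine ⟨min (δ^2/2) (ε^2/3200), lt_min hMpos (by positivity), ?_⟩
    intro a b c d ha hb hc hd hab hdd hf
    subst hd
    obtain ⟨e1, e2, e3, e4⟩ := aux_stab s δ (min (δ^2/2) (ε^2/3200)) a b c hs2 hs1 hs3 hδ hδ' ha hb hc hab hdd
      (lt_min hMpos (by positivity)) (min_le_left _ _) (by linarith [hf])
    have hm : min (δ^2/2) (ε^2/3200) ≤ ε^2/3200 := min_le_right _ _
    exact ⟨abs_le_of_sq_le' _ _ hε (by linarith [e1, hm]),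
      abs_le_of_sq_le' _ _ hε (by linarith [e2, hm]),
      abs_le_of_sq_le' _ _ hε (by linarith [e3, hm]),
      abs_le_of_sq_le' _ _ hε (by linarith [e4, hm])⟩
end

section
/- Let n be a positive integer and let H be a bipartite simple graph on n vertices with at least (1/4 − 2·10⁻¹⁴)·n² edges. Then H contains an induced subgraph on at least 0.999·n vertices whose minimum degree is at least 0.498·n. -/
/-!
On a side `s` of a bipartite graph with parts `s`, `t` every degree is at most `#t`, and the
deficiencies `#t - deg v` add up to `#s * #t - e ≤ n² / 4 - e ≤ 2·10⁻¹⁴ n²`. The same bound forces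
`(#s - #t)² ≤ n² - 4e` to be tiny, so both parts exceed `0.4999 n`, and by Markov's inequality at
most `0.0005 n` vertices on each side have degree below `0.499 n`. Deleting all of them costs every
remaining vertex at most `0.001 n` neighbours.
-/

open SimpleGraph Finset

theorem le_of_mul_sub_le_of_nearly_balanced {n a b e k : ℝ} (hn : 0 < n) (hab : a + b = n)
    (he : (1 / 4 - 2 / 10 ^ 14) * n ^ 2 ≤ e) (heab : e ≤ a * b) (hk0 : 0 ≤ k)
    (hk : k * (b - 0.499 * n) ≤ a * b - e) : k ≤ 0.0005 * n := by
  have hgap : a * b - e ≤ 2 / 10 ^ 14 * n ^ 2 := by nlinarith [sq_nonneg (a - b)]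
  have hbal : (a - b) ^ 2 ≤ (0.0002 * n) ^ 2 := by nlinarith
  have hb : 0.4999 * n ≤ b := by linarith [(abs_le_of_sq_le_sq' hbal (by positivity)).2]
  have : k * (0.0009 * n) ≤ 2 / 10 ^ 14 * n ^ 2 := by nlinarith
  nlinarith

namespace SimpleGraph

variable {V : Type*} [Fintype V] {G : SimpleGraph V} [DecidableRel G.Adj] {s t : Finset V}

theorem IsBipartiteWith.card_edgeFinset_le_mul (h : G.IsBipartiteWith s t) :
    #G.edgeFinset ≤ #s * #t := by
  rw [← isBipartiteWith_sum_degrees_eq_card_edges h, ← smul_eq_mul]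
  exact sum_le_card_nsmul _ _ _ fun v hv => isBipartiteWith_degree_le h hv

theorem IsBipartiteWith.sum_sub_degree_eq (h : G.IsBipartiteWith s t) :
    ∑ v ∈ s, ((#t : ℝ) - G.degree v) = #s * #t - #G.edgeFinset := by
  rw [sum_sub_distrib, sum_const, nsmul_eq_mul, ← Nat.cast_sum,
    isBipartiteWith_sum_degrees_eq_card_edges h]

theorem IsBipartiteWith.card_filter_degree_lt_mul_le (h : G.IsBipartiteWith s t) (δ : ℝ) :
    #{v ∈ s | (G.degree v : ℝ) < δ} * ((#t : ℝ) - δ) ≤ #s * #t - #G.edgeFinset := by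
  rw [← h.sum_sub_degree_eq, ← nsmul_eq_mul, ← sum_const]
  calc ∑ _v ∈ s with (G.degree _v : ℝ) < δ, ((#t : ℝ) - δ)
      ≤ ∑ v ∈ s with (G.degree v : ℝ) < δ, ((#t : ℝ) - G.degree v) :=
        sum_le_sum fun v hv => by linarith [(mem_filter.1 hv).2]
    _ ≤ ∑ v ∈ s, ((#t : ℝ) - G.degree v) :=
        sum_le_sum_of_subset_of_nonneg (filter_subset _ _) fun v hv _ =>
          sub_nonneg.2 (by exact_mod_cast isBipartiteWith_degree_le h hv)

theorem degree_le_card_filter_adj_add_card_compl [DecidableEq V] (S : Finset V) (v : V) :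
    G.degree v ≤ #{u ∈ S | G.Adj v u} + #Sᶜ := by
  rw [← card_neighborFinset_eq_degree]
  calc #(G.neighborFinset v) ≤ #({u ∈ S | G.Adj v u} ∪ Sᶜ) :=
        card_le_card fun u hu => by by_cases u ∈ S <;> simp_all
    _ ≤ _ := card_union_le _ _

theorem IsBipartiteWith.card_filter_degree_lt_le [DecidableEq V] (h : G.IsBipartiteWith s ↑sᶜ)
    (hV : 0 < Fintype.card V)
    (he : (1 / 4 - 2 / 10 ^ 14) * (Fintype.card V : ℝ) ^ 2 ≤ #G.edgeFinset) :
    (#{v | (G.degree v : ℝ) < 0.499 * Fintype.card V} : ℝ) ≤ 0.001 * Fintype.card V := by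
  set δ : ℝ := 0.499 * Fintype.card V
  have hcard : (#s : ℝ) + #sᶜ = Fintype.card V := by exact_mod_cast card_add_card_compl s
  have hV' : (0 : ℝ) < Fintype.card V := by exact_mod_cast hV
  have hs := le_of_mul_sub_le_of_nearly_balanced hV' hcard he
    (by exact_mod_cast h.card_edgeFinset_le_mul) (Nat.cast_nonneg _)
    (h.card_filter_degree_lt_mul_le δ)
  have hsc := le_of_mul_sub_le_of_nearly_balanced hV' ((add_comm _ _).trans hcard) he
    (by exact_mod_cast h.symm.card_edgeFinset_le_mul) (Nat.cast_nonneg _)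
    (h.symm.card_filter_degree_lt_mul_le δ)
  have hsplit : #{v | (G.degree v : ℝ) < δ} ≤
      #{v ∈ s | (G.degree v : ℝ) < δ} + #{v ∈ sᶜ | (G.degree v : ℝ) < δ} := by
    rw [← union_compl s, filter_union]
    exact card_union_le _ _
  have : (#{v | (G.degree v : ℝ) < δ} : ℝ) ≤
      #{v ∈ s | (G.degree v : ℝ) < δ} + #{v ∈ sᶜ | (G.degree v : ℝ) < δ} := by
    exact_mod_cast hsplit
  linarith

end SimpleGraph

theorem stmt17 :
    ∀ n : ℕ, 0 < n → ∀ H : SimpleGraph (Fin n),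
      (∃ A : Set (Fin n), ∀ u v, H.Adj u v →
        (u ∈ A ∧ v ∉ A) ∨ (u ∉ A ∧ v ∈ A)) →
      ((1 / 4 - 2 / 10 ^ 14 : ℝ)) * (n : ℝ) ^ 2 ≤ (H.edgeSet.ncard : ℝ) →
      ∃ S : Finset (Fin n), (0.999 : ℝ) * (n : ℝ) ≤ (S.card : ℝ) ∧
        ∀ v ∈ S, (0.498 : ℝ) * (n : ℝ) ≤ ({u | u ∈ S ∧ H.Adj v u}.ncard : ℝ) := by
  classical
  intro n hn H ⟨A, hA⟩ he
  set s : Finset (Fin n) := {v | v ∈ A}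
  have hbip : H.IsBipartiteWith s ↑(sᶜ) :=
    ⟨disjoint_coe.2 disjoint_compl_right, fun u v huv => by simpa [s] using hA u v huv⟩
  rw [← coe_edgeFinset, Set.ncard_coe_finset] at he
  have hT := hbip.card_filter_degree_lt_le (by simpa using hn) (by simpa using he)
  simp only [Fintype.card_fin] at hT
  set T : Finset (Fin n) := {v | (H.degree v : ℝ) < 0.499 * n}
  refine ⟨Tᶜ, ?_, fun v hv => ?_⟩
  · rw [card_compl, Nat.cast_sub (card_le_univ T), Fintype.card_fin]
    linarith
  · have hv' : (0.499 : ℝ) * n ≤ H.degree v := by simpa [T] using hv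
    have hdeg : (H.degree v : ℝ) ≤ #{u ∈ Tᶜ | H.Adj v u} + #T := by
      exact_mod_cast compl_compl T ▸ H.degree_le_card_filter_adj_add_card_compl Tᶜ v
    have hnbr : {u | u ∈ Tᶜ ∧ H.Adj v u}.ncard = #{u ∈ Tᶜ | H.Adj v u} := by
      rw [← Set.ncard_coe_finset, coe_filter]
    rw [hnbr]
    linarith
end

section
/- Let n be a positive integer and let H be a bipartite simple graph with parts A and B such that |A| + |B| ≤ n, H has at least 0.999·n vertices, and every vertex of H has at least 0.498·n neighbors in H. Then for all subsets A' ⊆ A and B' ⊆ B with |A'| ≥ 0.49·n and |B'| ≥ 0.49·n, the number of edges of H with one endpoint in A' and the other in B' is at least 0.236·n². -/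
open SimpleGraph
open scoped Classical

lemma key18 (n : ℕ) (A B A' B' : Finset (Fin n)) (H : SimpleGraph (Fin n))
    (hd : Disjoint A B)
    (hnb : ∀ u ∈ A, ∀ v, H.Adj u v → v ∈ B)
    (hdeg : ∀ u ∈ A', (0.498 : ℝ) * n ≤ ((H.neighborFinset u).card : ℝ))
    (hA' : A' ⊆ A) (hB' : B' ⊆ B)
    (hB : (B.card : ℝ) ≤ (n : ℝ) / 2)
    (ha : (0.49 : ℝ) * n ≤ (A'.card : ℝ)) (hb : (0.49 : ℝ) * n ≤ (B'.card : ℝ)) :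
    (0.236 : ℝ) * (n : ℝ) ^ 2 ≤
      (({e | e ∈ H.edgeSet ∧ ∃ u ∈ A', ∃ v ∈ B', e = s(u, v)}).ncard : ℝ) := by
  classical
  set E : Set (Sym2 (Fin n)) := {e | e ∈ H.edgeSet ∧ ∃ u ∈ A', ∃ v ∈ B', e = s(u, v)}
  set F : Finset (Sym2 (Fin n)) :=
    A'.biUnion (fun u => (H.neighborFinset u ∩ B').image (fun v => s(u, v))) with hF
  have hsub : (F : Set (Sym2 (Fin n))) ⊆ E := by
    intro e he
    rw [Finset.mem_coe, hF, Finset.mem_biUnion] at he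
    simp only [Finset.mem_image, Finset.mem_inter] at he
    obtain ⟨u, hu, v, ⟨hv1, hv2⟩, rfl⟩ := he
    rw [SimpleGraph.mem_neighborFinset] at hv1
    exact ⟨hv1, u, hu, v, hv2, rfl⟩
  have hcard : (F.card : ℝ) ≤ (E.ncard : ℝ) := by
    have := Set.ncard_le_ncard hsub (Set.toFinite E)
    rw [Set.ncard_coe_finset] at this
    exact_mod_cast this
  have hdisj : ∀ u ∈ A', ∀ u' ∈ A', u ≠ u' →
      Disjoint ((H.neighborFinset u ∩ B').image (fun v => s(u, v)))
        ((H.neighborFinset u' ∩ B').image (fun v => s(u', v))) := by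
    intro u hu u' hu' hne
    rw [Finset.disjoint_left]
    intro e he he'
    simp only [Finset.mem_image, Finset.mem_inter] at he he'
    obtain ⟨v, ⟨_, hv2⟩, rfl⟩ := he
    obtain ⟨v', ⟨_, hv2'⟩, hee⟩ := he'
    rw [Sym2.eq_iff] at hee
    rcases hee with ⟨h1, h2⟩ | ⟨h1, h2⟩
    · exact hne h1.symm
    · exact (Finset.disjoint_left.mp hd (hA' hu) (hB' (h2 ▸ hv2'))).elim
  have hFcard : F.card = ∑ u ∈ A', (H.neighborFinset u ∩ B').card := by
    rw [hF, Finset.card_biUnion hdisj]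
    refine Finset.sum_congr rfl fun u _ => ?_
    rw [Finset.card_image_of_injective _ (fun a b h => by
      rwa [Sym2.congr_right] at h)]
  have hterm : ∀ u ∈ A', (0.488 : ℝ) * n ≤ ((H.neighborFinset u ∩ B').card : ℝ) := by
    intro u hu
    have hsub2 : H.neighborFinset u \ B' ⊆ B \ B' := by
      apply Finset.sdiff_subset_sdiff _ le_rfl
      intro v hv
      exact hnb u (hA' hu) v ((SimpleGraph.mem_neighborFinset _ _ _).mp hv)
    have h1 : (H.neighborFinset u ∩ B').card + (H.neighborFinset u \ B').card
        = (H.neighborFinset u).card := Finset.card_inter_add_card_sdiff _ _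
    have h2 : ((H.neighborFinset u \ B').card : ℝ) ≤ ((B \ B').card : ℝ) := by
      exact_mod_cast Finset.card_le_card hsub2
    have h3 : ((B \ B').card : ℝ) = (B.card : ℝ) - (B'.card : ℝ) :=
      Finset.cast_card_sdiff hB'
    have h4 := hdeg u hu
    have h1' : ((H.neighborFinset u ∩ B').card : ℝ) + ((H.neighborFinset u \ B').card : ℝ)
        = ((H.neighborFinset u).card : ℝ) := by exact_mod_cast h1
    nlinarith
  have hsum : (0.49 : ℝ) * n * ((0.488 : ℝ) * n) ≤ (F.card : ℝ) := by
    rw [hFcard]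
    push_cast
    calc (0.49 : ℝ) * n * ((0.488 : ℝ) * n) ≤ (A'.card : ℝ) * ((0.488 : ℝ) * n) := by
          apply mul_le_mul_of_nonneg_right ha
          positivity
      _ = ∑ _u ∈ A', (0.488 : ℝ) * n := by rw [Finset.sum_const, nsmul_eq_mul]
      _ ≤ ∑ u ∈ A', ((H.neighborFinset u ∩ B').card : ℝ) := Finset.sum_le_sum hterm
  nlinarith [sq_nonneg (n : ℝ)]

theorem stmt18 :
    ∀ n : ℕ, 0 < n → ∀ A B : Finset (Fin n), Disjoint A B →
      A.card + B.card ≤ n →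
      ∀ H : SimpleGraph (Fin n),
        (∀ u v, H.Adj u v → (u ∈ A ∧ v ∈ B) ∨ (u ∈ B ∧ v ∈ A)) →
        (0.999 : ℝ) * (n : ℝ) ≤ ((A ∪ B).card : ℝ) →
        (∀ v ∈ A ∪ B, (0.498 : ℝ) * (n : ℝ) ≤ ((H.neighborSet v).ncard : ℝ)) →
        ∀ A' ⊆ A, ∀ B' ⊆ B,
          (0.49 : ℝ) * (n : ℝ) ≤ (A'.card : ℝ) →
          (0.49 : ℝ) * (n : ℝ) ≤ (B'.card : ℝ) →
          (0.236 : ℝ) * (n : ℝ) ^ 2 ≤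
            (({e | e ∈ H.edgeSet ∧ ∃ u ∈ A', ∃ v ∈ B', e = s(u, v)}).ncard : ℝ) := by
  intro n hn A B hd hsum H hbip h999 hdeg A' hA' B' hB' ha hb
  have hdeg' : ∀ v ∈ A ∪ B, (0.498 : ℝ) * n ≤ ((H.neighborFinset v).card : ℝ) := by
    intro v hv
    have := hdeg v hv
    rwa [Set.ncard_eq_toFinset_card' , ← SimpleGraph.neighborFinset_def] at this
  have hhalf : (A.card : ℝ) ≤ (n : ℝ) / 2 ∨ (B.card : ℝ) ≤ (n : ℝ) / 2 := by
    by_contra h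
    push_neg at h
    have : (n : ℝ) < (A.card : ℝ) + (B.card : ℝ) := by linarith [h.1, h.2]
    have h2 : ((A.card + B.card : ℕ) : ℝ) ≤ (n : ℝ) := by exact_mod_cast hsum
    push_cast at h2
    linarith
  rcases hhalf with hA | hB2
  · -- |A| ≤ n/2 : apply key with roles swapped
    have hnb : ∀ u ∈ B, ∀ v, H.Adj u v → v ∈ A := by
      intro u hu v hadj
      rcases hbip u v hadj with ⟨h1, h2⟩ | ⟨h1, h2⟩
      · exact (Finset.disjoint_left.mp hd h1 hu).elim
      · exact h2
    have := key18 n B A B' A' H hd.symm hnb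
      (fun u hu => hdeg' u (Finset.mem_union_right _ (hB' hu))) hB' hA' hA hb ha
    have hEeq : {e | e ∈ H.edgeSet ∧ ∃ u ∈ B', ∃ v ∈ A', e = s(u, v)}
        = {e | e ∈ H.edgeSet ∧ ∃ u ∈ A', ∃ v ∈ B', e = s(u, v)} := by
      ext e
      simp only [Set.mem_setOf_eq]
      constructor
      · rintro ⟨he, u, hu, v, hv, rfl⟩
        exact ⟨he, v, hv, u, hu, Sym2.eq_swap⟩
      · rintro ⟨he, u, hu, v, hv, rfl⟩
        exact ⟨he, v, hv, u, hu, Sym2.eq_swap⟩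
    rwa [hEeq] at this
  · have hnb : ∀ u ∈ A, ∀ v, H.Adj u v → v ∈ B := by
      intro u hu v hadj
      rcases hbip u v hadj with ⟨h1, h2⟩ | ⟨h1, h2⟩
      · exact h2
      · exact (Finset.disjoint_left.mp hd hu h1).elim
    exact key18 n A B A' B' H hd hnb
      (fun u hu => hdeg' u (Finset.mem_union_left _ (hA' hu))) hA' hB' hB2 ha hb
end

section
/- Let k ≥ 2 be an integer and let n ≥ 250k. Let G be a simple graph on n vertices, and let G₀ be a bipartite subgraph of G with parts A and B such that G₀ has at least 0.999·n vertices and every vertex of G₀ has at least 0.498·n neighbors in G₀. If G contains an edge with both endpoints in A, or an edge with both endpoints in B, then at least 0.236·n² edges of G occur in C_{2k+1}. -/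
open SimpleGraph

/-- An edge `e` of `G` occurs in `C_m`: `G` contains a cycle of length `m`
whose edge set contains `e`. -/
def occursInC {V : Type*} (G : SimpleGraph V) (m : ℕ) (e : Sym2 V) : Prop :=
  ∃ (u : V) (w : G.Walk u u), w.IsCycle ∧ w.length = m ∧ e ∈ w.edges

/-- The number of edges of `G` that occur in a cycle of length `m`. -/
noncomputable def countEdgesInC {V : Type*} (G : SimpleGraph V) (m : ℕ) : ℕ :=
  {e | e ∈ G.edgeSet ∧ occursInC G m e}.ncard

lemma main_aux (k n : ℕ) (hk : 2 ≤ k) (hn : 250 * k ≤ n)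
    (G G₀ : SimpleGraph (Fin n)) (hle : G₀ ≤ G)
    (A B : Finset (Fin n)) (hAB : Disjoint A B)
    (hbip : ∀ u v, G₀.Adj u v → (u ∈ A ∧ v ∈ B) ∨ (u ∈ B ∧ v ∈ A))
    (hdeg : ∀ v ∈ A ∪ B, (0.498 : ℝ) * (n : ℝ) ≤ ((G₀.neighborSet v).ncard : ℝ))
    (u v : Fin n) (hu : u ∈ A) (hv : v ∈ A) (huv : G.Adj u v) :
    (0.236 : ℝ) * (n : ℝ) ^ 2 ≤ (countEdgesInC G (2 * k + 1) : ℝ) := by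
  classical
  have hkn : (250 : ℝ) * k ≤ n := by exact_mod_cast hn
  have hk2 : (2 : ℝ) ≤ k := by exact_mod_cast hk
  have hn500 : (500 : ℝ) ≤ n := by linarith
  -- basic structural facts
  have hND : ∀ w ∈ A ∪ B, (0.498 : ℝ) * n ≤ ((G₀.neighborFinset w).card : ℝ) := by
    intro w hw
    have h := hdeg w hw
    rwa [neighborFinset_def, ← Set.ncard_eq_toFinset_card']
  have hABne : ∀ a ∈ A, ∀ b ∈ B, a ≠ b := by
    intro a ha b hb h
    exact Finset.disjoint_left.mp hAB ha (h ▸ hb)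
  have hsubA : ∀ w ∈ A, G₀.neighborFinset w ⊆ B := by
    intro w hw z hz
    rw [mem_neighborFinset] at hz
    rcases hbip w z hz with h | h
    · exact h.2
    · exact absurd hw (Finset.disjoint_right.mp hAB h.1)
  have hsubB : ∀ w ∈ B, G₀.neighborFinset w ⊆ A := by
    intro w hw z hz
    rw [mem_neighborFinset] at hz
    rcases hbip w z hz with h | h
    · exact absurd hw (Finset.disjoint_left.mp hAB h.1)
    · exact h.2
  have hBcard : (0.498 : ℝ) * n ≤ (B.card : ℝ) := by
    refine le_trans (hND u (Finset.mem_union_left _ hu)) ?_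
    exact_mod_cast Finset.card_le_card (hsubA u hu)
  have hBpos : 0 < B.card := by
    have : (0 : ℝ) < B.card := by nlinarith
    exact_mod_cast this
  obtain ⟨b₀, hb₀⟩ := Finset.card_pos.mp hBpos
  have hAcard : (0.498 : ℝ) * n ≤ (A.card : ℝ) := by
    refine le_trans (hND b₀ (Finset.mem_union_right _ hb₀)) ?_
    exact_mod_cast Finset.card_le_card (hsubB b₀ hb₀)
  have hABn : (A.card : ℝ) + B.card ≤ n := by
    have h : A.card + B.card ≤ n := by
      rw [← Finset.card_union_of_disjoint hAB]
      simpa using Finset.card_le_univ (A ∪ B)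
    exact_mod_cast h
  have hB502 : (B.card : ℝ) ≤ 0.502 * n := by linarith
  -- codegree bound
  have hco : ∀ x ∈ A, ∀ y ∈ A,
      (0.494 : ℝ) * n ≤ ((G₀.neighborFinset x ∩ G₀.neighborFinset y).card : ℝ) := by
    intro x hx y hy
    have h1 := hND x (Finset.mem_union_left _ hx)
    have h2 := hND y (Finset.mem_union_left _ hy)
    have h3 : ((G₀.neighborFinset x ∪ G₀.neighborFinset y).card : ℝ) ≤ B.card := by
      exact_mod_cast Finset.card_le_card
        (Finset.union_subset (hsubA x hx) (hsubA y hy))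
    have h4 : ((G₀.neighborFinset x ∪ G₀.neighborFinset y).card : ℝ)
        + ((G₀.neighborFinset x ∩ G₀.neighborFinset y).card : ℝ)
        = ((G₀.neighborFinset x).card : ℝ) + ((G₀.neighborFinset y).card : ℝ) := by
      exact_mod_cast congrArg (Nat.cast : ℕ → ℝ)
        (Finset.card_union_add_card_inter (G₀.neighborFinset x) (G₀.neighborFinset y))
    linarith
  have memN : ∀ w z : Fin n, z ∈ G₀.neighborFinset w → G₀.Adj w z := by
    intro w z h
    rwa [mem_neighborFinset] at h
  have hpick : ∀ S F : Finset (Fin n), (F.card : ℝ) < (S.card : ℝ) →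
      ∃ z ∈ S, z ∉ F := by
    intro S F h
    by_contra hc
    push_neg at hc
    have hsub : S ⊆ F := fun z hz => hc z hz
    have := Finset.card_le_card hsub
    have : (S.card : ℝ) ≤ F.card := by exact_mod_cast this
    linarith
  obtain ⟨k', rfl⟩ : ∃ m, k = m + 2 := ⟨k - 2, by omega⟩
  have hkc : ((k' : ℝ)) + 2 = ((k' + 2 : ℕ) : ℝ) := by push_cast; ring
  have hkn' : (250 : ℝ) * ((k' : ℝ) + 2) ≤ n := by rw [hkc]; exact hkn
  have hk0 : (0 : ℝ) ≤ k' := Nat.cast_nonneg _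
  have hnum : (4 : ℝ) * ((k' : ℝ) + 2) + 5 < 0.494 * n := by nlinarith
  -- the path lemma
  have path_aux : ∀ m : ℕ, ∀ x y : Fin n, x ∈ A → y ∈ A → x ≠ y →
      ∀ F : Finset (Fin n), F.card + 2 * m + 2 ≤ 4 * (k' + 2) → x ∉ F → y ∉ F →
      ∃ p : G.Walk x y, p.IsPath ∧ p.length = 2 * (m + 1) ∧
        ∀ z ∈ p.support, z ∉ F := by
    intro m
    induction m with
    | zero =>
      intro x y hx hy hxy F hF hxF hyF
      have hFc : (F.card : ℝ) ≤ 4 * ((k' : ℝ) + 2) := by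
        have : F.card ≤ 4 * (k' + 2) := by omega
        calc (F.card : ℝ) ≤ ((4 * (k' + 2) : ℕ) : ℝ) := by exact_mod_cast this
          _ = 4 * ((k' : ℝ) + 2) := by push_cast; ring
      have hlt : (F.card : ℝ) < ((G₀.neighborFinset x ∩ G₀.neighborFinset y).card : ℝ) := by
        have := hco x hx y hy
        linarith
      obtain ⟨z, hzS, hzF⟩ := hpick _ _ hlt
      rw [Finset.mem_inter] at hzS
      have hxz : G₀.Adj x z := memN x z hzS.1
      have hyz : G₀.Adj y z := memN y z hzS.2
      have hzB : z ∈ B := hsubA x hx hzS.1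
      refine ⟨Walk.cons (hle hxz) (Walk.cons (hle hyz).symm Walk.nil), ?_, ?_, ?_⟩
      · rw [Walk.cons_isPath_iff, Walk.cons_isPath_iff]
        refine ⟨⟨Walk.IsPath.nil, by simp [(hABne y hy z hzB).symm]⟩,
          by simp [hABne x hx z hzB, hxy]⟩
      · simp [Walk.length_cons]
      · intro w hw
        simp [Walk.support_cons] at hw
        rcases hw with rfl | rfl | rfl
        exacts [hxF, hzF, hyF]
    | succ m ih =>
      intro x y hx hy hxy F hF hxF hyF
      have hFc : (F.card : ℝ) ≤ 4 * ((k' : ℝ) + 2) := by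
        have : F.card ≤ 4 * (k' + 2) := by omega
        calc (F.card : ℝ) ≤ ((4 * (k' + 2) : ℕ) : ℝ) := by exact_mod_cast this
          _ = 4 * ((k' : ℝ) + 2) := by push_cast; ring
      -- pick y₁ ∈ N(x) avoiding F ∪ {x, y}
      have h1 : ((F ∪ {x, y}).card : ℝ) < ((G₀.neighborFinset x).card : ℝ) := by
        have hc : (F ∪ {x, y}).card ≤ F.card + 2 := by
          refine le_trans (Finset.card_union_le _ _) ?_
          have : ({x, y} : Finset (Fin n)).card ≤ 2 := Finset.card_le_two
          omega
        have hc' : ((F ∪ {x, y}).card : ℝ) ≤ (F.card : ℝ) + 2 := by exact_mod_cast hc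
        have := hND x (Finset.mem_union_left _ hx)
        linarith
      obtain ⟨y₁, hy₁N, hy₁F⟩ := hpick _ _ h1
      simp only [Finset.mem_union, Finset.mem_insert, Finset.mem_singleton, not_or] at hy₁F
      obtain ⟨hy₁F, hy₁x, hy₁y⟩ := hy₁F
      have hy₁B : y₁ ∈ B := hsubA x hx hy₁N
      have hxy₁ : G₀.Adj x y₁ := memN x y₁ hy₁N
      -- pick y₂ ∈ N(y₁) avoiding F ∪ {x, y, y₁}
      have h2 : ((F ∪ {x, y, y₁}).card : ℝ) < ((G₀.neighborFinset y₁).card : ℝ) := by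
        have hc : (F ∪ {x, y, y₁}).card ≤ F.card + 3 := by
          refine le_trans (Finset.card_union_le _ _) ?_
          have : ({x, y, y₁} : Finset (Fin n)).card ≤ 3 := by
            refine le_trans (Finset.card_insert_le _ _) ?_
            have : ({y, y₁} : Finset (Fin n)).card ≤ 2 := Finset.card_le_two
            omega
          omega
        have hc' : ((F ∪ {x, y, y₁}).card : ℝ) ≤ (F.card : ℝ) + 3 := by exact_mod_cast hc
        have := hND y₁ (Finset.mem_union_right _ hy₁B)
        linarith
      obtain ⟨y₂, hy₂N, hy₂F⟩ := hpick _ _ h2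
      simp only [Finset.mem_union, Finset.mem_insert, Finset.mem_singleton, not_or] at hy₂F
      obtain ⟨hy₂F, hy₂x, hy₂y, hy₂y₁⟩ := hy₂F
      have hy₂A : y₂ ∈ A := hsubB y₁ hy₁B hy₂N
      have hy₁y₂ : G₀.Adj y₁ y₂ := memN y₁ y₂ hy₂N
      obtain ⟨p, hp, hlen, hsup⟩ := ih y₂ y hy₂A hy hy₂y (F ∪ {x, y₁})
        (by
          have hc : (F ∪ {x, y₁}).card ≤ F.card + 2 := by
            refine le_trans (Finset.card_union_le _ _) ?_
            have : ({x, y₁} : Finset (Fin n)).card ≤ 2 := Finset.card_le_two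
            omega
          omega)
        (by
          simp only [Finset.mem_union, Finset.mem_insert, Finset.mem_singleton, not_or]
          exact ⟨hy₂F, hy₂x, hy₂y₁⟩)
        (by
          simp only [Finset.mem_union, Finset.mem_insert, Finset.mem_singleton, not_or]
          exact ⟨hyF, Ne.symm hxy, Ne.symm hy₁y⟩)
      refine ⟨Walk.cons (hle hxy₁) (Walk.cons (hle hy₁y₂) p), ?_, ?_, ?_⟩
      · rw [Walk.cons_isPath_iff, Walk.cons_isPath_iff]
        refine ⟨⟨hp, fun h => hsup y₁ h (by simp)⟩, ?_⟩
        simp only [Walk.support_cons, List.mem_cons, not_or]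
        exact ⟨fun h => hy₁x h.symm, fun h => hsup x h (by simp)⟩
      · simp [Walk.length_cons, hlen]; omega
      · intro z hz
        simp only [Walk.support_cons, List.mem_cons] at hz
        rcases hz with rfl | rfl | hz
        exacts [hxF, hy₁F, fun hzF => hsup z hz (Finset.mem_union_left _ hzF)]
  -- cycle through x, b, z, path z→y, y  (for x adjacent to b in G₀, yx an edge of G)
  have cyc2 : ∀ x ∈ A, ∀ y ∈ A, ∀ b, G₀.Adj x b → G.Adj y x →
      occursInC G (2 * (k' + 2) + 1) s(x, b) := by
    intro x hx y hy b hxb hyx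
    have hbB : b ∈ B := hsubA x hx (by rwa [mem_neighborFinset])
    have hxy : x ≠ y := hyx.ne'
    have hlt : ((({x, y} : Finset (Fin n))).card : ℝ) < ((G₀.neighborFinset b).card : ℝ) := by
      have h1 := hND b (Finset.mem_union_right _ hbB)
      have h2 : (({x, y} : Finset (Fin n)).card : ℝ) ≤ 2 := by
        exact_mod_cast (Finset.card_le_two : ({x, y} : Finset (Fin n)).card ≤ 2)
      linarith
    obtain ⟨z, hzN, hzF⟩ := hpick _ _ hlt
    simp only [Finset.mem_insert, Finset.mem_singleton, not_or] at hzF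
    obtain ⟨hzx, hzy⟩ := hzF
    have hzA : z ∈ A := hsubB b hbB hzN
    have hbz : G₀.Adj b z := memN b z hzN
    obtain ⟨p, hp, hlen, hsup⟩ := path_aux k' z y hzA hy hzy {x, b}
      (by
        have : ({x, b} : Finset (Fin n)).card ≤ 2 := Finset.card_le_two
        omega)
      (by
        simp only [Finset.mem_insert, Finset.mem_singleton, not_or]
        exact ⟨hzx, hABne z hzA b hbB⟩)
      (by
        simp only [Finset.mem_insert, Finset.mem_singleton, not_or]
        exact ⟨Ne.symm hxy, hABne y hy b hbB⟩)
    refine ⟨y, Walk.cons hyx (Walk.cons (hle hxb) (Walk.cons (hle hbz) p)), ?_, ?_, ?_⟩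
    · rw [Walk.cons_isCycle_iff]
      refine ⟨?_, ?_⟩
      · rw [Walk.cons_isPath_iff, Walk.cons_isPath_iff]
        refine ⟨⟨hp, fun h => hsup b h (by simp)⟩, ?_⟩
        simp only [Walk.support_cons, List.mem_cons, not_or]
        exact ⟨hABne x hx b hbB, fun h => hsup x h (by simp)⟩
      · simp only [Walk.edges_cons, List.mem_cons, not_or]
        refine ⟨?_, ?_, fun h => hsup x (Walk.snd_mem_support_of_mem_edges p h) (by simp)⟩
        · rw [Sym2.eq_iff]
          rintro (⟨h1, _⟩ | ⟨h1, _⟩)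
          · exact hxy h1.symm
          · exact hABne y hy b hbB h1
        · rw [Sym2.eq_iff]
          rintro (⟨h1, _⟩ | ⟨_, h2⟩)
          · exact hABne y hy b hbB h1
          · exact hABne x hx b hbB h2
    · simp [Walk.length_cons, hlen]; omega
    · simp [Walk.edges_cons]
  -- cycle a, b, u, v, path v→a  (for generic a)
  have cyc1 : ∀ a ∈ A, ∀ b, G₀.Adj b a → G₀.Adj u b → a ≠ u → a ≠ v →
      occursInC G (2 * (k' + 2) + 1) s(a, b) := by
    intro a ha b hba hub hau hav
    have hbB : b ∈ B := hsubA u hu (by rwa [mem_neighborFinset])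
    obtain ⟨p, hp, hlen, hsup⟩ := path_aux k' v a hv ha (Ne.symm hav) {b, u}
      (by
        have : ({b, u} : Finset (Fin n)).card ≤ 2 := Finset.card_le_two
        omega)
      (by
        simp only [Finset.mem_insert, Finset.mem_singleton, not_or]
        exact ⟨hABne v hv b hbB, Ne.symm huv.ne⟩)
      (by
        simp only [Finset.mem_insert, Finset.mem_singleton, not_or]
        exact ⟨hABne a ha b hbB, hau⟩)
    refine ⟨a, Walk.cons (hle hba.symm) (Walk.cons (hle hub.symm) (Walk.cons huv p)),
      ?_, ?_, ?_⟩
    · rw [Walk.cons_isCycle_iff]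
      refine ⟨?_, ?_⟩
      · rw [Walk.cons_isPath_iff, Walk.cons_isPath_iff]
        refine ⟨⟨hp, fun h => hsup u h (by simp)⟩, ?_⟩
        simp only [Walk.support_cons, List.mem_cons, not_or]
        exact ⟨Ne.symm (hABne u hu b hbB), fun h => hsup b h (by simp)⟩
      · simp only [Walk.edges_cons, List.mem_cons, not_or]
        refine ⟨?_, ?_, fun h => hsup b (Walk.snd_mem_support_of_mem_edges p h) (by simp)⟩
        · rw [Sym2.eq_iff]
          rintro (⟨h1, _⟩ | ⟨h1, _⟩)
          · exact hABne a ha b hbB h1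
          · exact hau h1
        · rw [Sym2.eq_iff]
          rintro (⟨h1, _⟩ | ⟨h1, _⟩)
          · exact hau h1
          · exact hav h1
    · simp [Walk.length_cons, hlen]; omega
    · simp [Walk.edges_cons]
  -- every edge (a, b) with b ∈ N(u), a ∈ N(b) occurs in C_{2k+1}
  have hocc : ∀ b ∈ G₀.neighborFinset u, ∀ a ∈ G₀.neighborFinset b,
      s(a, b) ∈ G.edgeSet ∧ occursInC G (2 * (k' + 2) + 1) s(a, b) := by
    intro b hb a ha
    have hub : G₀.Adj u b := memN u b hb
    have hba : G₀.Adj b a := memN b a ha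
    have hbB : b ∈ B := hsubA u hu hb
    have haA : a ∈ A := hsubB b hbB ha
    refine ⟨G.mem_edgeSet.mpr (hle hba.symm), ?_⟩
    by_cases hau : a = u
    · subst hau; exact cyc2 a hu v hv b hba.symm huv.symm
    by_cases hav : a = v
    · subst hav; exact cyc2 a hv u hu b hba.symm huv
    · exact cyc1 a haA b hba hub hau hav
  -- counting
  set Nu := G₀.neighborFinset u with hNu
  set S : Finset (Sym2 (Fin n)) :=
    Nu.biUnion (fun b => (G₀.neighborFinset b).image (fun a => s(a, b))) with hSdef
  have hdisj : ∀ b ∈ Nu, ∀ b' ∈ Nu, b ≠ b' →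
      Disjoint ((G₀.neighborFinset b).image (fun a => s(a, b)))
        ((G₀.neighborFinset b').image (fun a => s(a, b'))) := by
    intro b hb b' hb' hbb'
    have hbB : b ∈ B := hsubA u hu hb
    have hb'B : b' ∈ B := hsubA u hu hb'
    rw [Finset.disjoint_left]
    rintro e he he'
    obtain ⟨a, ha, rfl⟩ := Finset.mem_image.mp he
    obtain ⟨a', ha', heq⟩ := Finset.mem_image.mp he'
    rcases Sym2.eq_iff.mp heq with ⟨h1, h2⟩ | ⟨h1, h2⟩
    · exact hbb' h2.symm
    · exact hABne a' (hsubB b' hb'B ha') b hbB h1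
  have hScard : S.card = ∑ b ∈ Nu, (G₀.neighborFinset b).card := by
    rw [hSdef, Finset.card_biUnion hdisj]
    refine Finset.sum_congr rfl ?_
    intro b hb
    have hbB : b ∈ B := hsubA u hu hb
    refine Finset.card_image_of_injOn ?_
    intro a ha a' ha' h
    rcases Sym2.eq_iff.mp h with ⟨h1, _⟩ | ⟨h1, h2⟩
    · exact h1
    · exact (hABne a (hsubB b hbB (Finset.mem_coe.mp ha)) b hbB h1).elim
  have hsub : ↑S ⊆ {e | e ∈ G.edgeSet ∧ occursInC G (2 * (k' + 2) + 1) e} := by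
    intro e he
    rw [Finset.mem_coe, hSdef, Finset.mem_biUnion] at he
    obtain ⟨b, hb, he⟩ := he
    obtain ⟨a, ha, rfl⟩ := Finset.mem_image.mp he
    exact hocc b hb a ha
  have hcount : S.card ≤ countEdgesInC G (2 * (k' + 2) + 1) := by
    have hrfl : countEdgesInC G (2 * (k' + 2) + 1)
        = {e | e ∈ G.edgeSet ∧ occursInC G (2 * (k' + 2) + 1) e}.ncard := rfl
    rw [hrfl, ← Set.ncard_coe_finset S]
    exact Set.ncard_le_ncard hsub (Set.toFinite _)
  have hsum : (Nu.card : ℝ) * (0.498 * n) ≤ (S.card : ℝ) := by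
    rw [hScard]
    push_cast
    calc (Nu.card : ℝ) * (0.498 * n) = ∑ _b ∈ Nu, (0.498 * (n : ℝ)) := by
          rw [Finset.sum_const, nsmul_eq_mul]
      _ ≤ ∑ b ∈ Nu, ((G₀.neighborFinset b).card : ℝ) :=
          Finset.sum_le_sum (fun b hb => hND b (Finset.mem_union_right _ (hsubA u hu hb)))
  have hNuc : (0.498 : ℝ) * n ≤ (Nu.card : ℝ) := hND u (Finset.mem_union_left _ hu)
  have hc' : (S.card : ℝ) ≤ (countEdgesInC G (2 * (k' + 2) + 1) : ℝ) := by
    exact_mod_cast hcount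
  have hnn : (0 : ℝ) ≤ (n : ℝ) := Nat.cast_nonneg n
  nlinarith [hsum, hNuc, hc', hn500]

theorem stmt19 :
    ∀ k : ℕ, 2 ≤ k → ∀ n : ℕ, 250 * k ≤ n →
      ∀ G G₀ : SimpleGraph (Fin n), G₀ ≤ G →
      ∀ A B : Finset (Fin n), Disjoint A B →
        (∀ u v, G₀.Adj u v → (u ∈ A ∧ v ∈ B) ∨ (u ∈ B ∧ v ∈ A)) →
        (0.999 : ℝ) * (n : ℝ) ≤ ((A ∪ B).card : ℝ) →
        (∀ v ∈ A ∪ B, (0.498 : ℝ) * (n : ℝ) ≤ ((G₀.neighborSet v).ncard : ℝ)) →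
        ((∃ u ∈ A, ∃ v ∈ A, G.Adj u v) ∨ (∃ u ∈ B, ∃ v ∈ B, G.Adj u v)) →
        (0.236 : ℝ) * (n : ℝ) ^ 2 ≤ (countEdgesInC G (2 * k + 1) : ℝ) := by
  intro k hk n hn G G₀ hle A B hAB hbip hcard hdeg hedge
  rcases hedge with ⟨u, hu, v, hv, huv⟩ | ⟨u, hu, v, hv, huv⟩
  · exact main_aux k n hk hn G G₀ hle A B hAB hbip hdeg u v hu hv huv
  · exact main_aux k n hk hn G G₀ hle B A hAB.symm
      (fun a b h => (hbip a b h).symm)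
      (fun w hw => hdeg w (by rwa [Finset.union_comm])) u v hu hv huv
end
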